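/- arXiv:1703.08434 — 2 statements merged into one kernel-verified Lean document; each statement's English description precedes it below -/
import Mathlib

section
/- Let μ₁, μ₂, σ₁, σ₂ be real numbers with σ₁ > 0, σ₂ > 0, σ₁ ≠ σ₂, and let τ > 0. Define β = sqrt((μ₁−μ₂)² + 2(σ₁²−σ₂²)·ln(τσ₁/σ₂)) and assume the quantity under the square root is positive. Let w₀⁺ = (μ₂σ₁² − μ₁σ₂² + σ₁σ₂β)/(σ₁²−σ₂²) and w₀⁻ = (μ₂σ₁² − μ₁σ₂² − σ₁σ₂β)/(σ₁²−σ₂²). Define z₁(w) = (w−μ₁)/σ₁ and z₂(w) = (w−μ₂)/σ₂. Then z₂(w₀⁻)/σ₂ ≥ z₁(w₀⁻)/σ₁ implies False; i.e., w₀⁻ does not satisfy the inequality z₂/σ₂ ≥ z₁/σ₁. -/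
/-! The second-order quantity `z₂/σ₂ - z₁/σ₁ = (w - μ₂)/σ₂² - (w - μ₁)/σ₁²` is affine in `w`, and
at a root `w = (μ₂σ₁² - μ₁σ₂² + c σ₁σ₂)/(σ₁² - σ₂²)` of the quadratic it equals `c/(σ₁σ₂)`.
For `w₀⁻` we have `c = -β < 0`, so the second-order condition fails there. -/

lemma div_div_sub_div_div_eq_of_mul_eq {w μ₁ μ₂ σ₁ σ₂ c : ℝ} (hσ₁ : σ₁ ≠ 0) (hσ₂ : σ₂ ≠ 0)
    (hw : w * (σ₁ ^ 2 - σ₂ ^ 2) = μ₂ * σ₁ ^ 2 - μ₁ * σ₂ ^ 2 + c * σ₁ * σ₂) :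
    (w - μ₂) / σ₂ / σ₂ - (w - μ₁) / σ₁ / σ₁ = c / (σ₁ * σ₂) := by
  field_simp
  linear_combination hw

theorem stmt_0_general (μ₁ μ₂ σ₁ σ₂ τ : ℝ) (hσ₁ : 0 < σ₁) (hσ₂ : 0 < σ₂) (hne : σ₁ ≠ σ₂)
    (hΔ : 0 < (μ₁ - μ₂)^2 + 2 * (σ₁^2 - σ₂^2) * Real.log (τ * σ₁ / σ₂))
    (β : ℝ) (hβ : β = Real.sqrt ((μ₁ - μ₂)^2 + 2 * (σ₁^2 - σ₂^2) * Real.log (τ * σ₁ / σ₂)))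
    (w₀minus : ℝ)
    (hw : w₀minus = (μ₂ * σ₁^2 - μ₁ * σ₂^2 - σ₁ * σ₂ * β) / (σ₁^2 - σ₂^2))
    (h : ((w₀minus - μ₂) / σ₂) / σ₂ ≥ ((w₀minus - μ₁) / σ₁) / σ₁) : False := by
  have hβ_pos : 0 < β := hβ ▸ Real.sqrt_pos.mpr hΔ
  have hden : σ₁ ^ 2 - σ₂ ^ 2 ≠ 0 := by
    rw [sub_ne_zero]
    exact fun hsq => hne ((pow_left_inj₀ hσ₁.le hσ₂.le two_ne_zero).mp hsq)
  have hroot : w₀minus * (σ₁ ^ 2 - σ₂ ^ 2) = μ₂ * σ₁ ^ 2 - μ₁ * σ₂ ^ 2 + -β * σ₁ * σ₂ := by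
    rw [hw, div_mul_cancel₀ _ hden]
    ring
  have hgap := div_div_sub_div_div_eq_of_mul_eq hσ₁.ne' hσ₂.ne' hroot
  have hneg : -β / (σ₁ * σ₂) < 0 := div_neg_of_neg_of_pos (neg_neg_of_pos hβ_pos) (by positivity)
  linarith

theorem stmt_0 (μ₁ μ₂ σ₁ σ₂ τ : ℝ) (hσ₁ : 0 < σ₁) (hσ₂ : 0 < σ₂) (hne : σ₁ ≠ σ₂)
    (hτ : 0 < τ)
    (hΔ : 0 < (μ₁ - μ₂)^2 + 2 * (σ₁^2 - σ₂^2) * Real.log (τ * σ₁ / σ₂))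
    (β : ℝ) (hβ : β = Real.sqrt ((μ₁ - μ₂)^2 + 2 * (σ₁^2 - σ₂^2) * Real.log (τ * σ₁ / σ₂)))
    (w₀minus : ℝ)
    (hw : w₀minus = (μ₂ * σ₁^2 - μ₁ * σ₂^2 - σ₁ * σ₂ * β) / (σ₁^2 - σ₂^2))
    (h : ((w₀minus - μ₂) / σ₂) / σ₂ ≥ ((w₀minus - μ₁) / σ₁) / σ₁) : False :=
  stmt_0_general μ₁ μ₂ σ₁ σ₂ τ hσ₁ hσ₂ hne hΔ β hβ w₀minus hw h
end

section
/- Let μ₁, μ₂, σ₁, σ₂ be real numbers with σ₁ > 0, σ₂ > 0, σ₁ ≠ σ₂, and τ > 0. Suppose Δ := (μ₁−μ₂)² + 2(σ₁²−σ₂²)·ln(τσ₁/σ₂) > 0 and let β = sqrt(Δ). Then w₀⁺ = (μ₂σ₁² − μ₁σ₂² + σ₁σ₂β)/(σ₁²−σ₂²) satisfies the inequality (w₀⁺−μ₂)/σ₂² ≥ (w₀⁺−μ₁)/σ₁², i.e., z₂/σ₂ ≥ z₁/σ₁ where z₁ = (w₀⁺−μ₁)/σ₁ and z₂ = (w₀⁺−μ₂)/σ₂.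 -/
/-!
Clearing denominators, the difference `z₂/σ₂ - z₁/σ₁` at the root `w₀⁺` collapses to
`β / (σ₁ σ₂)`, whatever the sign of `σ₁² - σ₂²`; it is nonnegative because `β` is a square root.
-/

lemma sub_div_div_sub_sub_div_div_of_eq_root {μ₁ μ₂ σ₁ σ₂ β w : ℝ} (hσ₁ : σ₁ ≠ 0)
    (hσ₂ : σ₂ ≠ 0) (hσ : σ₁ ^ 2 - σ₂ ^ 2 ≠ 0)
    (hw : w = (μ₂ * σ₁ ^ 2 - μ₁ * σ₂ ^ 2 + σ₁ * σ₂ * β) / (σ₁ ^ 2 - σ₂ ^ 2)) :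
    (w - μ₂) / σ₂ / σ₂ - (w - μ₁) / σ₁ / σ₁ = β / (σ₁ * σ₂) := by
  subst hw
  field_simp
  ring

theorem stmt_1_general (μ₁ μ₂ σ₁ σ₂ τ : ℝ) (hσ₁ : 0 < σ₁) (hσ₂ : 0 < σ₂) (hne : σ₁ ≠ σ₂)
    (β : ℝ) (hβ : β = Real.sqrt ((μ₁ - μ₂)^2 + 2 * (σ₁^2 - σ₂^2) * Real.log (τ * σ₁ / σ₂)))
    (w₀plus : ℝ)
    (hw : w₀plus = (μ₂ * σ₁^2 - μ₁ * σ₂^2 + σ₁ * σ₂ * β) / (σ₁^2 - σ₂^2)) :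
    ((w₀plus - μ₂) / σ₂) / σ₂ ≥ ((w₀plus - μ₁) / σ₁) / σ₁ := by
  have hβ₀ : 0 ≤ β := hβ ▸ Real.sqrt_nonneg _
  have hσ : σ₁ ^ 2 - σ₂ ^ 2 ≠ 0 := by
    rw [sub_ne_zero]
    exact fun h => hne ((pow_left_inj₀ hσ₁.le hσ₂.le two_ne_zero).mp h)
  rw [ge_iff_le, ← sub_nonneg, sub_div_div_sub_sub_div_div_of_eq_root hσ₁.ne' hσ₂.ne' hσ hw]
  positivity

theorem stmt_1 (μ₁ μ₂ σ₁ σ₂ τ : ℝ) (hσ₁ : 0 < σ₁) (hσ₂ : 0 < σ₂) (hne : σ₁ ≠ σ₂)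
    (hτ : 0 < τ)
    (hΔ : 0 < (μ₁ - μ₂)^2 + 2 * (σ₁^2 - σ₂^2) * Real.log (τ * σ₁ / σ₂))
    (β : ℝ) (hβ : β = Real.sqrt ((μ₁ - μ₂)^2 + 2 * (σ₁^2 - σ₂^2) * Real.log (τ * σ₁ / σ₂)))
    (w₀plus : ℝ)
    (hw : w₀plus = (μ₂ * σ₁^2 - μ₁ * σ₂^2 + σ₁ * σ₂ * β) / (σ₁^2 - σ₂^2)) :
    ((w₀plus - μ₂) / σ₂) / σ₂ ≥ ((w₀plus - μ₁) / σ₁) / σ₁ :=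
  stmt_1_general μ₁ μ₂ σ₁ σ₂ τ hσ₁ hσ₂ hne β hβ w₀plus hw
end
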